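/- Let y solve y' = M y + f(y), y(0) = y₀, with f twice continuously differentiable. The one-step error of the two-stage SVERK method given by Y₂ = exp((h/2)M) y₀ + (h/2) f(y₀) and y₁ = exp(hM) y₀ + h f(Y₂) + (h²/2) M f(y₀) satisfies y(h) − y₁ = O(h³) as h → 0. -/

import Mathlib

/-! Each of `y(h)`, `exp(hM) y₀` and `f(Y₂)` is expanded by Taylor's formula, to order two for the
first two and to order one for `f(Y₂)`, which is multiplied by `h`. Since `y'(0) = M y₀ + f(y₀)` and
`y''(0) = M (M y₀ + f(y₀)) + Df(y₀)(M y₀ + f(y₀))`, the polynomial parts cancel exactly and only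
the `O(h³)` remainders are left. The remainder bounds come from the mean value inequality: a
function vanishing at `0` whose derivative is `O(tᵏ)` is `O(tᵏ⁺¹)`. -/

open Matrix NormedSpace

open Filter Topology Asymptotics

theorem exists_pos_bound_of_isBigO_pow {E : Type*} [NormedAddCommGroup E] {g : ℝ → E} {k : ℕ}
    (hg : g =O[𝓝 0] (· ^ k)) :
    ∃ C δ : ℝ, 0 < C ∧ 0 < δ ∧ ∀ t : ℝ, 0 < t → t < δ → ‖g t‖ ≤ C * t ^ k := by
  obtain ⟨C, hC, hCg⟩ := hg.exists_pos
  obtain ⟨δ, hδ, hball⟩ := Metric.eventually_nhds_iff_ball.1 hCg.bound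
  refine ⟨C, δ, hC, hδ, fun t ht htδ => ?_⟩
  have := hball t (by simpa [abs_of_pos ht] using htδ)
  rwa [norm_pow, Real.norm_of_nonneg ht.le] at this

section Taylor

variable {E : Type*} [NormedAddCommGroup E] [NormedSpace ℝ E]

theorem isBigO_pow_succ_of_hasDerivAt {g g' : ℝ → E} {k : ℕ}
    (hg : ∀ t, HasDerivAt g (g' t) t) (hg0 : g 0 = 0) (hg' : g' =O[𝓝 0] (· ^ k)) :
    g =O[𝓝 0] (· ^ (k + 1)) := by
  obtain ⟨C, hC, hCg'⟩ := hg'.exists_pos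
  obtain ⟨ε, hε, hball⟩ := Metric.eventually_nhds_iff_ball.1 hCg'.bound
  refine IsBigO.of_bound C (Metric.eventually_nhds_iff_ball.2 ⟨ε, hε, fun t ht => ?_⟩)
  have hsub : Metric.closedBall (0 : ℝ) ‖t‖ ⊆ Metric.ball 0 ε :=
    Metric.closedBall_subset_ball (by simpa using ht)
  have hbound : ∀ s ∈ Metric.closedBall (0 : ℝ) ‖t‖, ‖g' s‖ ≤ C * ‖t‖ ^ k := fun s hs => by
    have hs' : ‖s‖ ≤ ‖t‖ := by simpa using hs
    calc ‖g' s‖ ≤ C * ‖s ^ k‖ := hball s (hsub hs)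
      _ ≤ C * ‖t‖ ^ k := by rw [norm_pow]; gcongr
  have hmvt := (convex_closedBall (0 : ℝ) ‖t‖).norm_image_sub_le_of_norm_hasDerivWithin_le
    (fun s _ => (hg s).hasDerivWithinAt) hbound (Metric.mem_closedBall_self (norm_nonneg t))
    (by simp : t ∈ Metric.closedBall (0 : ℝ) ‖t‖)
  rw [hg0, sub_zero, sub_zero] at hmvt
  rw [norm_pow, pow_succ, ← mul_assoc]
  exact hmvt

theorem isBigO_taylor_remainder_one {g g' : ℝ → E} (hg : ∀ t, HasDerivAt g (g' t) t)
    (hg' : DifferentiableAt ℝ g' 0) :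
    (fun t => g t - g 0 - t • g' 0) =O[𝓝 0] (· ^ 2) := by
  refine isBigO_pow_succ_of_hasDerivAt (g' := fun t => g' t - g' 0)
    (fun t => ((hg t).sub_const _).sub (by simpa using (hasDerivAt_id t).smul_const (g' 0)))
    (by simp) ?_
  simpa using hg'.hasDerivAt.isBigO_sub

theorem isBigO_taylor_remainder_two {g g' g'' : ℝ → E} (hg : ∀ t, HasDerivAt g (g' t) t)
    (hg' : ∀ t, HasDerivAt g' (g'' t) t) (hg'' : DifferentiableAt ℝ g'' 0) :
    (fun t => g t - g 0 - t • g' 0 - (t ^ 2 / 2) • g'' 0) =O[𝓝 0] (· ^ 3) := by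
  have hsq (t : ℝ) : HasDerivAt (fun s : ℝ => (s ^ 2 / 2) • g'' 0) (t • g'' 0) t := by
    simpa using ((hasDerivAt_pow 2 t).div_const 2).smul_const (g'' 0)
  exact isBigO_pow_succ_of_hasDerivAt
    (fun t => (((hg t).sub_const _).sub ((hasDerivAt_id t).smul_const (g' 0))).sub (hsq t))
    (by simp) (by simpa using isBigO_taylor_remainder_one hg' hg'')

end Taylor

section Composition

variable {E F : Type*} [NormedAddCommGroup E] [NormedSpace ℝ E] [NormedAddCommGroup F]
  [NormedSpace ℝ F] {f : E → F}

theorem ContDiff.differentiableAt_fderiv_apply (hf : ContDiff ℝ 2 f) {u u' : ℝ → E} {t : ℝ}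
    (hu : DifferentiableAt ℝ u t) (hu' : DifferentiableAt ℝ u' t) :
    DifferentiableAt ℝ (fun s => fderiv ℝ f (u s) (u' s)) t :=
  ((((hf.fderiv_right one_add_one_eq_two.le).differentiable one_ne_zero) (u t)).comp t hu).clm_apply
    hu'

theorem ContDiff.isBigO_taylor_remainder_comp (hf : ContDiff ℝ 2 f) {u u' : ℝ → E}
    (hu : ∀ t, HasDerivAt u (u' t) t) (hu' : DifferentiableAt ℝ u' 0) :
    (fun t => f (u t) - f (u 0) - t • fderiv ℝ f (u 0) (u' 0)) =O[𝓝 0] (· ^ 2) :=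
  isBigO_taylor_remainder_one
    (fun t => (hf.differentiable two_ne_zero (u t)).hasFDerivAt.comp_hasDerivAt t (hu t))
    (hf.differentiableAt_fderiv_apply (hu 0).differentiableAt hu')

theorem ContDiff.isBigO_taylor_remainder_of_hasDerivAt_apply {F : E → E} (hF : ContDiff ℝ 2 F)
    {y : ℝ → E} (hy : ∀ t, HasDerivAt y (F (y t)) t) :
    (fun t => y t - y 0 - t • F (y 0) - (t ^ 2 / 2) • fderiv ℝ F (y 0) (F (y 0)))
      =O[𝓝 0] (· ^ 3) := by
  have hFd := hF.differentiable two_ne_zero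
  exact isBigO_taylor_remainder_two hy
    (fun t => (hFd (y t)).hasFDerivAt.comp_hasDerivAt t (hy t))
    (hF.differentiableAt_fderiv_apply (hy 0).differentiableAt
      ((hFd (y 0)).comp 0 (hy 0).differentiableAt))

end Composition

namespace Matrix

variable {n : Type*} [Fintype n] [DecidableEq n]

theorem hasDerivAt_exp_smul_mulVec (M : Matrix n n ℝ) (v : n → ℝ) (t : ℝ) :
    HasDerivAt (fun s : ℝ => exp (s • M) *ᵥ v) (exp (t • M) *ᵥ (M *ᵥ v)) t := by
  open scoped Norms.Operator in
  have := (LinearMap.toContinuousLinearMap ((mulVecBilin ℝ ℝ).flip v)).hasFDerivAt.comp_hasDerivAt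
    t (hasDerivAt_exp_smul_const (𝕂 := ℝ) M t)
  rw [mulVec_mulVec]
  exact this

theorem isBigO_exp_smul_mulVec_taylor_remainder (M : Matrix n n ℝ) (v : n → ℝ) :
    (fun t : ℝ => exp (t • M) *ᵥ v - v - t • (M *ᵥ v) - (t ^ 2 / 2) • (M *ᵥ M *ᵥ v))
      =O[𝓝 0] (· ^ 3) := by
  simpa using isBigO_taylor_remainder_two (hasDerivAt_exp_smul_mulVec M v)
    (hasDerivAt_exp_smul_mulVec M (M *ᵥ v))
    (hasDerivAt_exp_smul_mulVec M (M *ᵥ M *ᵥ v) 0).differentiableAt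

theorem isBigO_taylor_remainder_comp_exp_half_smul_mulVec_add {F : Type*} [NormedAddCommGroup F]
    [NormedSpace ℝ F] {g : (n → ℝ) → F} (hg : ContDiff ℝ 2 g) (M : Matrix n n ℝ) (v w : n → ℝ) :
    (fun t : ℝ => g (exp ((t / 2) • M) *ᵥ v + (t / 2) • w) - g v
      - (t / 2) • fderiv ℝ g v (M *ᵥ v + w)) =O[𝓝 0] (· ^ 2) := by
  have hu (s : ℝ) : HasDerivAt (fun s : ℝ => exp (s • M) *ᵥ v + s • w)
      (exp (s • M) *ᵥ (M *ᵥ v) + w) s :=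
    (hasDerivAt_exp_smul_mulVec M v s).add (by simpa using (hasDerivAt_id s).smul_const w)
  have := (hg.isBigO_taylor_remainder_comp hu
    ((hasDerivAt_exp_smul_mulVec M (M *ᵥ v) 0).differentiableAt.add_const _)).comp_tendsto
    ((continuous_id.div_const 2).tendsto' 0 0 (zero_div 2))
  simp only [Function.comp_def, zero_smul, exp_zero, one_mulVec, add_zero] at this
  refine this.trans (isBigO_of_le _ fun t => ?_)
  rw [norm_pow, norm_pow, norm_div]
  gcongr
  simp

end Matrix

/-- One-step error of the two-stage SVERK method is `O(h³)`. -/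
theorem SVERK2_local_error (d : ℕ) (M : Matrix (Fin d) (Fin d) ℝ)
    (f : (Fin d → ℝ) → (Fin d → ℝ)) (hf : ContDiff ℝ 2 f)
    (y₀ : Fin d → ℝ) (y : ℝ → Fin d → ℝ)
    (hy : ∀ t : ℝ, HasDerivAt y (M.mulVec (y t) + f (y t)) t)
    (hy0 : y 0 = y₀) :
    ∃ C δ : ℝ, 0 < C ∧ 0 < δ ∧ ∀ h : ℝ, 0 < h → h < δ →
      ‖y h - ((NormedSpace.exp (h • M)).mulVec y₀ +
          h • f ((NormedSpace.exp ((h / 2) • M)).mulVec y₀ + (h / 2) • f y₀) +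
          (h ^ 2 / 2) • M.mulVec (f y₀))‖ ≤ C * h ^ 3 := by
  set L := (mulVecLin M).toContinuousLinearMap
  have hL (v) : L v = M *ᵥ v := rfl
  have hDF : fderiv ℝ (fun z => M *ᵥ z + f z) y₀ = L + fderiv ℝ f y₀ :=
    (L.hasFDerivAt.add (hf.differentiable two_ne_zero y₀).hasFDerivAt).fderiv
  have hF : ContDiff ℝ 2 (fun z => M *ᵥ z + f z) := L.contDiff.add hf
  have hsol := hF.isBigO_taylor_remainder_of_hasDerivAt_apply hy
  rw [hy0, hDF] at hsol
  have hstep := (isBigO_refl id (𝓝 (0 : ℝ))).smul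
    (isBigO_taylor_remainder_comp_exp_half_smul_mulVec_add hf M y₀ (f y₀))
    |>.congr_right (g₂ := (· ^ 3)) fun t => by rw [id, smul_eq_mul, pow_succ' t 2]
  refine exists_pos_bound_of_isBigO_pow
    ((hsol.sub (isBigO_exp_smul_mulVec_taylor_remainder M y₀)).sub hstep |>.congr_left fun t => ?_)
  rw [id, _root_.add_apply, hL, mulVec_add, map_add]
  module
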